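/- For a poset-causal system, the following chain of inclusions holds among subspaces of the state space: the independently reachable subspace R̄ is contained in R° , which is contained in the reachable subspace R, which is contained in the weakly upstream reachable subspace R̃: R̄ ⊆ R° ⊆ R ⊆ R̃. -/
import Mathlib


open Matrix

attribute [local instance] Classical.propDecidable

/-- Block index type for a partition `n` over the index set `P`. -/
abbrev BIdx {P : Type*} (n : P → ℕ) : Type _ := (i : P) × Fin (n i)

variable {P : Type*} [Fintype P] [DecidableEq P]

/-- The embedding matrix `I_n(:,S)` of `ℝ^{n_S}` into `ℝ^{n}`. -/
noncomputable def embMat (n : P → ℕ) (S : Set P) :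
    Matrix (BIdx n) {a : BIdx n // a.1 ∈ S} ℝ :=
  Matrix.of fun p q => if p = (q : BIdx n) then 1 else 0

/-- The matrix of the orthogonal projection onto the coordinate subspace of block indices in `S`. -/
noncomputable def projMat (n : P → ℕ) (S : Set P) : Matrix (BIdx n) (BIdx n) ℝ :=
  Matrix.of fun p q => if p = q ∧ p.1 ∈ S then 1 else 0

/-- Downstream set `↓S = {i | ∃ j ∈ S, j ⪰ i}` (where `j ⪰ i` is encoded as `le i j`). -/
def downSet (le : P → P → Prop) (S : Set P) : Set P := {i | ∃ j ∈ S, le i j}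

/-- Upstream set `↑S = {i | ∃ j ∈ S, i ⪰ j}`. -/
def upSet (le : P → P → Prop) (S : Set P) : Set P := {i | ∃ j ∈ S, le j i}

/-- Membership of a block matrix in the block incidence space: `G_{ab} = 0` whenever `b ⋡ a`. -/
def Inc (le : P → P → Prop) {n m : P → ℕ} (G : Matrix (BIdx n) (BIdx m) ℝ) : Prop :=
  ∀ a b, ¬ le a.1 b.1 → G a b = 0

/-- Block compression `G(Q,S)` of a block matrix to block rows in `Q` and block columns in `S`. -/
def bcmp {n m : P → ℕ} (G : Matrix (BIdx n) (BIdx m) ℝ) (Q S : Set P) :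
    Matrix {a : BIdx n // a.1 ∈ Q} {a : BIdx m // a.1 ∈ S} ℝ :=
  G.submatrix Subtype.val Subtype.val

/-- The reachable subspace `R(A,B) = im [B, AB, ..., A^{n-1}B]`. -/
noncomputable def reach {ι κ : Type*} [Fintype ι] [Fintype κ] [DecidableEq ι]
    (A : Matrix ι ι ℝ) (B : Matrix ι κ ℝ) : Submodule ℝ (ι → ℝ) :=
  ⨆ k : Fin (Fintype.card ι), LinearMap.range ((A ^ (k : ℕ) * B).mulVecLin)

/-- The unobservable subspace `N(C,A) = ker [C; CA; ...; CA^{n-1}]`. -/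
noncomputable def unobs {ι κ : Type*} [Fintype ι] [Fintype κ] [DecidableEq ι]
    (C : Matrix κ ι ℝ) (A : Matrix ι ι ℝ) : Submodule ℝ (ι → ℝ) :=
  ⨅ k : Fin (Fintype.card ι), LinearMap.ker ((C * A ^ (k : ℕ)).mulVecLin)

/-- The reachable subspace, inside Euclidean space. -/
noncomputable def reachE {ι κ : Type*} [Fintype ι] [Fintype κ] [DecidableEq ι] [DecidableEq κ]
    (A : Matrix ι ι ℝ) (B : Matrix ι κ ℝ) : Submodule ℝ (EuclideanSpace ℝ ι) :=
  ⨆ k : Fin (Fintype.card ι), LinearMap.range (Matrix.toEuclideanLin (A ^ (k : ℕ) * B))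

/-- The unobservable subspace, inside Euclidean space. -/
noncomputable def unobsE {ι κ : Type*} [Fintype ι] [Fintype κ] [DecidableEq ι] [DecidableEq κ]
    (C : Matrix κ ι ℝ) (A : Matrix ι ι ℝ) : Submodule ℝ (EuclideanSpace ℝ ι) :=
  ⨅ k : Fin (Fintype.card ι), LinearMap.ker (Matrix.toEuclideanLin (C * A ^ (k : ℕ)))

/-- The coordinate subspace `X_S = ⊕_{j ∈ S} X_j` of the global state space. -/
noncomputable def coordSub (n : P → ℕ) (S : Set P) : Submodule ℝ (BIdx n → ℝ) :=
  LinearMap.range (projMat n S).mulVecLin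

/-- The coordinate subspace `X_S`, inside Euclidean space. -/
noncomputable def coordE (n : P → ℕ) (S : Set P) : Submodule ℝ (EuclideanSpace ℝ (BIdx n)) :=
  LinearMap.range (Matrix.toEuclideanLin (projMat n S))

/-- The `i`-downstream reachable set `R_i = R(A(↓i,↓i), B(↓i,i))`, embedded into the
global state space via `I_n(:,↓i)`. -/
noncomputable def Ri (le : P → P → Prop) {n m : P → ℕ}
    (A : Matrix (BIdx n) (BIdx n) ℝ) (B : Matrix (BIdx n) (BIdx m) ℝ) (i : P) :
    Submodule ℝ (BIdx n → ℝ) :=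
  Submodule.map (embMat n (downSet le {i})).mulVecLin
    (reach (bcmp A (downSet le {i}) (downSet le {i})) (bcmp B (downSet le {i}) {i}))

/-- The `i`-downstream reachable set, inside Euclidean space. -/
noncomputable def RiE (le : P → P → Prop) {n m : P → ℕ}
    (A : Matrix (BIdx n) (BIdx n) ℝ) (B : Matrix (BIdx n) (BIdx m) ℝ) (i : P) :
    Submodule ℝ (EuclideanSpace ℝ (BIdx n)) :=
  Submodule.map (Matrix.toEuclideanLin (embMat n (downSet le {i})))
    (reachE (bcmp A (downSet le {i}) (downSet le {i})) (bcmp B (downSet le {i}) {i}))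

/-- The `i`-upstream indistinguishable set `N_i = N(C(i,↑i), A(↑i,↑i))`, embedded into the
global state space via `I_n(:,↑i)`. -/
noncomputable def Ni (le : P → P → Prop) {n r : P → ℕ}
    (C : Matrix (BIdx r) (BIdx n) ℝ) (A : Matrix (BIdx n) (BIdx n) ℝ) (i : P) :
    Submodule ℝ (BIdx n → ℝ) :=
  Submodule.map (embMat n (upSet le {i})).mulVecLin
    (unobs (bcmp C {i} (upSet le {i})) (bcmp A (upSet le {i}) (upSet le {i})))

/-- The `i`-upstream indistinguishable set, inside Euclidean space. -/
noncomputable def NiE (le : P → P → Prop) {n r : P → ℕ}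
    (C : Matrix (BIdx r) (BIdx n) ℝ) (A : Matrix (BIdx n) (BIdx n) ℝ) (i : P) :
    Submodule ℝ (EuclideanSpace ℝ (BIdx n)) :=
  Submodule.map (Matrix.toEuclideanLin (embMat n (upSet le {i})))
    (unobsE (bcmp C {i} (upSet le {i})) (bcmp A (upSet le {i}) (upSet le {i})))

section Aux

variable {P : Type*} [Fintype P] [DecidableEq P]

/-- Sum of mulVec -/
lemma sum_mulVec' {ι κ σ : Type*} [Fintype κ] (s : Finset σ) (f : σ → Matrix ι κ ℝ)
    (x : κ → ℝ) : (∑ i ∈ s, f i) *ᵥ x = ∑ i ∈ s, (f i) *ᵥ x := by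
  induction s using Finset.cons_induction with
  | empty => simp [Matrix.zero_mulVec]
  | cons a s ha ih => rw [Finset.sum_cons, Finset.sum_cons, Matrix.add_mulVec, ih]

lemma mulVec_sum' {ι κ σ : Type*} [Fintype κ] (s : Finset σ) (M : Matrix ι κ ℝ)
    (f : σ → (κ → ℝ)) : M *ᵥ (∑ i ∈ s, f i) = ∑ i ∈ s, M *ᵥ f i := by
  induction s using Finset.cons_induction with
  | empty => simp [Matrix.mulVec_zero]
  | cons a s ha ih => rw [Finset.sum_cons, Finset.sum_cons, Matrix.mulVec_add, ih]

/-- Any power-range is inside the reachable subspace (Cayley–Hamilton). -/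
lemma range_pow_le_reach {ι κ : Type*} [Fintype ι] [Fintype κ] [DecidableEq ι]
    (M : Matrix ι ι ℝ) (B : Matrix ι κ ℝ) (k : ℕ) :
    LinearMap.range ((M ^ k * B).mulVecLin) ≤ reach M B := by
  rcases isEmpty_or_nonempty ι with h | h
  · intro x _
    have : Subsingleton (ι → ℝ) := ⟨fun a b => funext fun i => h.elim i⟩
    rw [Subsingleton.elim x 0]
    exact Submodule.zero_mem _
  · have hcard : 0 < Fintype.card ι := Fintype.card_pos
    have hmod : M ^ k = Polynomial.aeval M (Polynomial.X ^ k %ₘ M.charpoly) :=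
      M.pow_eq_aeval_mod_charpoly k
    set r := Polynomial.X ^ k %ₘ M.charpoly with hr
    have hdeg : r.natDegree < Fintype.card ι := by
      have h1 : r.degree < M.charpoly.degree :=
        Polynomial.degree_modByMonic_lt _ (M.charpoly_monic)
      have h2 : M.charpoly.degree = (Fintype.card ι : ℕ) := by
        rw [Polynomial.degree_eq_natDegree (M.charpoly_monic).ne_zero,
          Matrix.charpoly_natDegree_eq_dim]
      rcases eq_or_ne r 0 with h0 | h0
      · simpa [h0] using hcard
      · have := Polynomial.natDegree_lt_natDegree h0 (by
          rw [Polynomial.degree_eq_natDegree (M.charpoly_monic).ne_zero] at h1 ⊢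
          exact h1)
        rwa [Matrix.charpoly_natDegree_eq_dim] at this
    have hsum : M ^ k = ∑ j ∈ Finset.range (Fintype.card ι), r.coeff j • M ^ j := by
      rw [hmod, Polynomial.aeval_eq_sum_range' hdeg]
    rintro _ ⟨x, rfl⟩
    rw [Matrix.mulVecLin_apply, hsum, Matrix.sum_mul, sum_mulVec']
    apply Submodule.sum_mem
    intro j hj
    rw [Matrix.smul_mul, Matrix.smul_mulVec]
    apply Submodule.smul_mem
    refine Submodule.mem_iSup_of_mem (⟨j, Finset.mem_range.mp hj⟩ : Fin (Fintype.card ι)) ?_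
    exact ⟨x, rfl⟩

lemma mem_downSet_single {le : P → P → Prop} {i a : P} :
    a ∈ downSet le {i} ↔ le a i := by simp [downSet]

lemma mul_embMat {ι : Type*} (n : P → ℕ) (S : Set P) (M : Matrix ι (BIdx n) ℝ) :
    M * embMat n S = M.submatrix id Subtype.val := by
  ext p q
  simp only [Matrix.mul_apply, embMat, Matrix.of_apply, mul_ite, mul_one, mul_zero,
    Matrix.submatrix_apply, id_eq]
  rw [Finset.sum_ite_eq' Finset.univ (q : BIdx n) (fun s => M p s), if_pos (Finset.mem_univ _)]

lemma embMat_mul_apply {κ : Type*} [Fintype κ] (n : P → ℕ) (S : Set P)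
    (N : Matrix {a : BIdx n // a.1 ∈ S} κ ℝ) (p : BIdx n) (q : κ) :
    (embMat n S * N) p q = if h : p.1 ∈ S then N ⟨p, h⟩ q else 0 := by
  simp only [Matrix.mul_apply, embMat, Matrix.of_apply, ite_mul, one_mul, zero_mul]
  split
  · next h =>
    rw [Finset.sum_eq_single (⟨p, h⟩ : {a : BIdx n // a.1 ∈ S})]
    · simp
    · intro b _ hb
      rw [if_neg]
      exact fun he => hb (Subtype.ext he.symm)
    · simp
  · next h =>
    apply Finset.sum_eq_zero
    intro b _
    rw [if_neg]
    exact fun he => h (he ▸ b.2)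

lemma embMat_mulVec_single (n : P → ℕ) (i : P)
    (x : {a : BIdx n // a.1 ∈ ({i} : Set P)} → ℝ) (p : BIdx n) :
    (embMat n ({i} : Set P) *ᵥ x) p = if h : p.1 ∈ ({i} : Set P) then x ⟨p, h⟩ else 0 := by
  simp only [Matrix.mulVec, dotProduct, embMat, Matrix.of_apply, ite_mul, one_mul,
    zero_mul]
  split
  · next h =>
    rw [Finset.sum_eq_single (⟨p, h⟩ : {a : BIdx n // a.1 ∈ ({i} : Set P)})]
    · simp
    · intro b _ hb
      rw [if_neg]
      exact fun he => hb (Subtype.ext he.symm)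
    · simp
  · next h =>
    apply Finset.sum_eq_zero
    intro b _
    rw [if_neg]
    exact fun he => h (he ▸ b.2)

lemma sum_emb_section (n : P → ℕ) (u : BIdx n → ℝ) :
    ∑ i : P, embMat n ({i} : Set P) *ᵥ (fun a : {a : BIdx n // a.1 ∈ ({i} : Set P)} => u a.1)
      = u := by
  funext p
  rw [Finset.sum_apply]
  have h1 : ∀ i : P,
      (embMat n ({i} : Set P) *ᵥ (fun a : {a : BIdx n // a.1 ∈ ({i} : Set P)} => u a.1)) p
        = if h : p.1 ∈ ({i} : Set P) then u p else 0 := by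
    intro i
    rw [embMat_mulVec_single]
  rw [Finset.sum_congr rfl fun i _ => h1 i]
  simp

lemma sum_projMat (n : P → ℕ) :
    ∑ i : P, projMat n ({i} : Set P) = (1 : Matrix (BIdx n) (BIdx n) ℝ) := by
  ext p q
  rw [Matrix.sum_apply]
  simp only [projMat, Matrix.of_apply, Set.mem_singleton_iff, Matrix.one_apply]
  by_cases hpq : p = q
  · subst hpq
    rw [if_pos rfl, Finset.sum_eq_single p.1]
    · simp
    · intro b _ hb
      exact if_neg (fun hx => hb hx.2.symm)
    · simp
  · rw [if_neg hpq]
    apply Finset.sum_eq_zero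
    intro b _
    exact if_neg (fun hx => hpq hx.1)

lemma projMat_mul_embMat_zero [PartialOrder P] (n : P → ℕ) {j i : P} (h : ¬ j ≤ i) :
    projMat n ({j} : Set P) * embMat n (downSet (· ≤ ·) {i}) = 0 := by
  rw [mul_embMat]
  ext p q
  simp only [Matrix.submatrix_apply, id_eq, projMat, Matrix.of_apply, Matrix.zero_apply]
  rw [if_neg]
  rintro ⟨he, hp⟩
  have hq : (q : BIdx n).1 ≤ i := mem_downSet_single.mp q.2
  have hpj : p.1 = j := hp
  rw [he] at hpj
  exact h (hpj ▸ hq)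

section Key

variable [PartialOrder P] {n m : P → ℕ}
variable (A : Matrix (BIdx n) (BIdx n) ℝ) (B : Matrix (BIdx n) (BIdx m) ℝ)

lemma key_A (hA : Inc (· ≤ ·) A) (i : P) :
    embMat n (downSet (· ≤ ·) {i}) *
        bcmp A (downSet (· ≤ ·) {i}) (downSet (· ≤ ·) {i}) =
      A * embMat n (downSet (· ≤ ·) {i}) := by
  ext p q
  rw [embMat_mul_apply, mul_embMat]
  simp only [bcmp, Matrix.submatrix_apply, id_eq]
  split
  · rfl
  · next h =>
    symm
    apply hA
    intro hle
    exact h (mem_downSet_single.mpr (hle.trans (mem_downSet_single.mp q.2)))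

lemma key_A_pow (hA : Inc (· ≤ ·) A) (i : P) (k : ℕ) :
    embMat n (downSet (· ≤ ·) {i}) *
        (bcmp A (downSet (· ≤ ·) {i}) (downSet (· ≤ ·) {i})) ^ k =
      A ^ k * embMat n (downSet (· ≤ ·) {i}) := by
  induction k with
  | zero => simp
  | succ k ih =>
    rw [pow_succ, pow_succ, ← Matrix.mul_assoc, ih, Matrix.mul_assoc, key_A A hA,
      ← Matrix.mul_assoc]

lemma key_B (hB : Inc (· ≤ ·) B) (i : P) :
    embMat n (downSet (· ≤ ·) {i}) * bcmp B (downSet (· ≤ ·) {i}) ({i} : Set P) =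
      B * embMat m ({i} : Set P) := by
  ext p q
  rw [embMat_mul_apply, mul_embMat]
  simp only [bcmp, Matrix.submatrix_apply, id_eq]
  split
  · rfl
  · next h =>
    symm
    apply hB
    intro hle
    have : q.1.1 = i := q.2
    exact h (mem_downSet_single.mpr (this ▸ hle))

lemma key_full (hA : Inc (· ≤ ·) A) (hB : Inc (· ≤ ·) B) (i : P) (k : ℕ) :
    embMat n (downSet (· ≤ ·) {i}) *
        ((bcmp A (downSet (· ≤ ·) {i}) (downSet (· ≤ ·) {i})) ^ k *
          bcmp B (downSet (· ≤ ·) {i}) ({i} : Set P)) =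
      A ^ k * B * embMat m ({i} : Set P) := by
  rw [← Matrix.mul_assoc, key_A_pow A hA, Matrix.mul_assoc, key_B B hB, ← Matrix.mul_assoc]

lemma Ri_le_reach (hA : Inc (· ≤ ·) A) (hB : Inc (· ≤ ·) B) (i : P) :
    Ri (· ≤ ·) A B i ≤ reach A B := by
  rw [Ri, reach, Submodule.map_iSup]
  apply iSup_le
  intro k
  rw [← LinearMap.range_comp, ← Matrix.mulVecLin_mul, key_full A B hA hB]
  rw [Matrix.mulVecLin_mul, LinearMap.range_comp]
  exact le_trans (LinearMap.map_le_range) (range_pow_le_reach A B k)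

end Key

end Aux

/-- For a poset-causal system, the chain of inclusions `R̄ ⊆ R° ⊆ R ⊆ R̃` holds, where
`R̄ = ⊕_j Σ_{i∈↑j} (X_j ∩ R_i)` is the independently reachable subspace,
`R° = ⊕_j (X_j ∩ R)`, `R = R(A,B)` is the reachable subspace, and
`R̃ = ⊕_j Σ_{i∈↑j} P_{X_j} R_i` is the weakly upstream reachable subspace. -/
theorem controllability_chain [PartialOrder P] (n m : P → ℕ)
    (A : Matrix (BIdx n) (BIdx n) ℝ) (B : Matrix (BIdx n) (BIdx m) ℝ)
    (hA : Inc (· ≤ ·) A) (hB : Inc (· ≤ ·) B) :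
    (⨆ j : P, ⨆ i : P, ⨆ _ : j ≤ i, (coordSub n {j} ⊓ Ri (· ≤ ·) A B i)) ≤
        (⨆ j : P, (coordSub n {j} ⊓ reach A B)) ∧
      (⨆ j : P, (coordSub n {j} ⊓ reach A B)) ≤ reach A B ∧
      reach A B ≤
        ⨆ j : P, ⨆ i : P, ⨆ _ : j ≤ i,
          Submodule.map (projMat n {j}).mulVecLin (Ri (· ≤ ·) A B i) := by
  refine ⟨?_, ?_, ?_⟩
  · -- R̄ ⊆ R°
    refine iSup_le fun j => iSup_le fun i => iSup_le fun _ => ?_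
    refine le_trans (inf_le_inf_left _ (Ri_le_reach A B hA hB i)) (le_iSup (fun j : P => coordSub n {j} ⊓ reach A B) j)
  · -- R° ⊆ R
    exact iSup_le fun j => inf_le_right
  · -- R ⊆ R̃
    -- Step 1: reach A B ≤ ⨆ i, Ri
    have step1 : reach A B ≤ ⨆ i : P, Ri (· ≤ ·) A B i := by
      rw [reach]
      apply iSup_le
      intro k
      rintro _ ⟨u, rfl⟩
      rw [Matrix.mulVecLin_apply]
      have hu : (A ^ (k : ℕ) * B) *ᵥ u =
          ∑ i : P, (A ^ (k : ℕ) * B * embMat m ({i} : Set P)) *ᵥ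
            (fun a : {a : BIdx m // a.1 ∈ ({i} : Set P)} => u a.1) := by
        conv_lhs => rw [← sum_emb_section m u]
        rw [mulVec_sum']
        apply Finset.sum_congr rfl
        intro i _
        rw [Matrix.mulVec_mulVec]
      rw [hu]
      apply Submodule.sum_mem
      intro i _
      refine Submodule.mem_iSup_of_mem i ?_
      rw [← key_full A B hA hB i (k : ℕ), ← Matrix.mulVec_mulVec]
      exact Submodule.mem_map_of_mem
        (range_pow_le_reach _ _ (k : ℕ) (LinearMap.mem_range_self _ _))
    refine le_trans step1 (iSup_le fun i => ?_)
    -- Step 2: Ri i ≤ RHS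
    intro v hv
    obtain ⟨w, hw, rfl⟩ := hv
    have hv1 : (embMat n (downSet (· ≤ ·) ({i} : Set P))).mulVecLin w =
        ∑ j : P, (projMat n ({j} : Set P)) *ᵥ
          ((embMat n (downSet (· ≤ ·) ({i} : Set P))).mulVecLin w) := by
      rw [← sum_mulVec', sum_projMat, Matrix.one_mulVec]
    rw [hv1]
    apply Submodule.sum_mem
    intro j _
    by_cases hji : j ≤ i
    · refine Submodule.mem_iSup_of_mem j (Submodule.mem_iSup_of_mem i
        (Submodule.mem_iSup_of_mem hji ?_))
      exact Submodule.mem_map_of_mem ⟨w, hw, rfl⟩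
    · have : projMat n ({j} : Set P) *ᵥ
          ((embMat n (downSet (· ≤ ·) ({i} : Set P))).mulVecLin w) = 0 := by
        rw [Matrix.mulVecLin_apply, Matrix.mulVec_mulVec,
          projMat_mul_embMat_zero n hji, Matrix.zero_mulVec]
      rw [this]
      exact Submodule.zero_mem _
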